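/- Suppose nr = (q^m−1)/s for positive integers m and s, and suppose {l_i : i ∈ Z_{n,r}} = {l, m} for a positive integer l with l < m and l ∣ m. If N_l > 1, then 2(q−1)·δ^{(l)}_{⌊N_l/2⌋+1} > q·N_m·r. -/

import Mathlib

open scoped Classical

/-- The `q`-cyclotomic coset of `i` modulo `N`, with representatives taken in `{1, …, N}`. -/
noncomputable def cosetOf (q N i : ℕ) : Finset ℕ :=
  (Finset.Icc 1 N).filter (fun x => ∃ j : ℕ, x ≡ i * q ^ j [MOD N])

/-- `Z_{n,r} = {1 + i r : 0 ≤ i ≤ n-1}`. -/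
def Zset (n r : ℕ) : Finset ℕ := (Finset.range n).image (fun i => 1 + i * r)

/-- The collection of `q`-cyclotomic cosets contained in `Z_{n,r}`. -/
noncomputable def cosetsIn (q n r : ℕ) : Finset (Finset ℕ) :=
  (Zset n r).image (fun i => cosetOf q (n * r) i)

/-- `N_l`: the number of `q`-cyclotomic cosets of size `l` contained in `Z_{n,r}`. -/
noncomputable def Ncount (q n r l : ℕ) : ℕ :=
  ((cosetsIn q n r).filter (fun C => C.card = l)).card

/-- Coset leader: the smallest element of a coset. -/
noncomputable def leader (C : Finset ℕ) : ℕ := sInf (C : Set ℕ)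

/-- The sorted (increasing) list of coset leaders of the cosets of size `l` in `Z_{n,r}`. -/
noncomputable def leaderList (q n r l : ℕ) : List ℕ :=
  Finset.sort (((cosetsIn q n r).filter (fun C => C.card = l)).image leader) (· ≤ ·)

/-- `δ_i^{(l)}`: the `i`-th smallest coset leader (1-indexed). -/
noncomputable def delta (q n r l i : ℕ) : ℕ := (leaderList q n r l).getD (i - 1) 0


/-!
Write `N = n r`. As `q` is prime to `N`, multiplication by `q` permutes the residues `{1, …, N}`;
the cyclotomic cosets are its orbits, so the size of a coset is the minimal period of its
elements. As every size is `l` or `m > l`, the union `S` of the cosets of size `l` is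
`{x ∈ Z_{n,r} : x q^l ≡ x (mod N)}`, i.e. the `x ∈ [1, N]` with `x ≡ 1 (mod r)` and `d ∣ x`, where
`d = N / gcd(N, q^l - 1)`. This is a residue class modulo `L = lcm(d, r)`, so `l N_l = |S| = N / L`,
and distinct coset leaders in `S` differ by at least `L`: `δ_{⌊N_l/2⌋+1} ≥ δ_1 + ⌊N_l/2⌋ L`, while
`L ≤ r δ_1` because `d ∣ δ_1`. Together with `n = l N_l + m N_m` and `m ≥ 2l` (as `l ∣ m`), these
bounds give the inequality.
-/

open Finset Function

section Representatives

variable {N : ℕ}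

def reprIcc (N a : ℕ) : ℕ := if a % N = 0 then N else a % N

theorem reprIcc_mem (hN : 0 < N) (a : ℕ) : reprIcc N a ∈ Icc 1 N := by
  have := Nat.mod_lt a hN
  unfold reprIcc
  split_ifs <;> simp only [mem_Icc] <;> omega

theorem reprIcc_modEq (N a : ℕ) : reprIcc N a ≡ a [MOD N] := by
  unfold reprIcc
  split_ifs with h
  · simp [Nat.ModEq, h]
  · exact Nat.mod_modEq a N

theorem eq_of_modEq_of_mem_Icc {x y : ℕ} (hx : x ∈ Icc 1 N) (hy : y ∈ Icc 1 N)
    (h : x ≡ y [MOD N]) : x = y := by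
  rw [mem_Icc] at hx hy
  exact h.eq_of_abs_lt (abs_sub_lt_iff.2 (by omega))

end Representatives

section Orbits

variable {q N x : ℕ}

def mulIcc (q N x : ℕ) : ℕ := reprIcc N (x * q)

theorem iterate_mulIcc_modEq (x j : ℕ) : (mulIcc q N)^[j] x ≡ x * q ^ j [MOD N] := by
  induction j with
  | zero => simp [Nat.ModEq.refl]
  | succ j ih =>
    rw [iterate_succ_apply', pow_succ, ← mul_assoc]
    exact (reprIcc_modEq _ _).trans (ih.mul_right q)

theorem iterate_mulIcc_mem (hx : x ∈ Icc 1 N) : ∀ j, (mulIcc q N)^[j] x ∈ Icc 1 N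
  | 0 => hx
  | j + 1 => by
    rw [iterate_succ_apply']
    exact reprIcc_mem (by rw [mem_Icc] at hx; omega) _

theorem iterate_mulIcc_eq_iff {y j : ℕ} (hx : x ∈ Icc 1 N) (hy : y ∈ Icc 1 N) :
    (mulIcc q N)^[j] x = y ↔ y ≡ x * q ^ j [MOD N] :=
  ⟨fun h => h ▸ iterate_mulIcc_modEq x j, fun h =>
    eq_of_modEq_of_mem_Icc (iterate_mulIcc_mem hx j) hy ((iterate_mulIcc_modEq x j).trans h.symm)⟩

theorem isPeriodicPt_mulIcc_iff {j : ℕ} (hx : x ∈ Icc 1 N) :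
    IsPeriodicPt (mulIcc q N) j x ↔ x * q ^ j ≡ x [MOD N] :=
  (iterate_mulIcc_eq_iff hx hx).trans Nat.ModEq.comm

theorem mem_periodicPts_mulIcc (hq : q.Coprime N) (hx : x ∈ Icc 1 N) :
    x ∈ periodicPts (mulIcc q N) := by
  refine ⟨N.totient, Nat.totient_pos.2 (by rw [mem_Icc] at hx; omega), ?_⟩
  rw [isPeriodicPt_mulIcc_iff hx]
  simpa using (Nat.ModEq.pow_totient hq).mul_left x

theorem mem_cosetOf_iff {y : ℕ} (hx : x ∈ Icc 1 N) :
    y ∈ cosetOf q N x ↔ ∃ j, (mulIcc q N)^[j] x = y := by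
  simp only [cosetOf, mem_filter]
  constructor
  · rintro ⟨hy, j, hj⟩
    exact ⟨j, (iterate_mulIcc_eq_iff hx hy).2 hj⟩
  · rintro ⟨j, rfl⟩
    exact ⟨iterate_mulIcc_mem hx j, j, iterate_mulIcc_modEq x j⟩

theorem self_mem_cosetOf (hx : x ∈ Icc 1 N) : x ∈ cosetOf q N x :=
  (mem_cosetOf_iff hx).2 ⟨0, rfl⟩

theorem cosetOf_eq_image_range (hq : q.Coprime N) (hx : x ∈ Icc 1 N) :
    cosetOf q N x = (range (minimalPeriod (mulIcc q N) x)).image ((mulIcc q N)^[·] x) := by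
  have hpos := minimalPeriod_pos_of_mem_periodicPts (mem_periodicPts_mulIcc hq hx)
  ext y
  rw [mem_cosetOf_iff hx, mem_image]
  constructor
  · rintro ⟨j, rfl⟩
    exact ⟨j % _, mem_range.2 (Nat.mod_lt _ hpos), iterate_mod_minimalPeriod_eq⟩
  · rintro ⟨j, -, rfl⟩
    exact ⟨j, rfl⟩

theorem card_cosetOf (hq : q.Coprime N) (hx : x ∈ Icc 1 N) :
    (cosetOf q N x).card = minimalPeriod (mulIcc q N) x := by
  rw [cosetOf_eq_image_range hq hx, card_image_of_injOn (by rw [coe_range]; exact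
    iterate_injOn_Iio_minimalPeriod), card_range]

theorem card_cosetOf_dvd_iff (hq : q.Coprime N) (hx : x ∈ Icc 1 N) {j : ℕ} :
    (cosetOf q N x).card ∣ j ↔ x * q ^ j ≡ x [MOD N] := by
  rw [card_cosetOf hq hx, ← isPeriodicPt_iff_minimalPeriod_dvd, isPeriodicPt_mulIcc_iff hx]

theorem cosetOf_eq_of_mem (hq : q.Coprime N) (hx : x ∈ Icc 1 N) {y : ℕ}
    (hy : y ∈ cosetOf q N x) : cosetOf q N y = cosetOf q N x := by
  obtain ⟨a, rfl⟩ := (mem_cosetOf_iff hx).1 hy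
  have hy' := iterate_mulIcc_mem (q := q) hx a
  refine eq_of_subset_of_card_le (fun z hz => ?_) ?_
  · obtain ⟨j, rfl⟩ := (mem_cosetOf_iff hy').1 hz
    exact (mem_cosetOf_iff hx).2 ⟨j + a, iterate_add_apply _ _ _ _⟩
  · rw [card_cosetOf hq hx, card_cosetOf hq hy',
      minimalPeriod_apply_iterate (mem_periodicPts_mulIcc hq hx)]

end Orbits

section Zset

variable {q n r : ℕ}

theorem mem_Zset_iff (hr : 0 < r) {x : ℕ} :
    x ∈ Zset n r ↔ x ∈ Icc 1 (n * r) ∧ x ≡ 1 [MOD r] := by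
  simp only [Zset, mem_image, mem_range, mem_Icc]
  constructor
  · rintro ⟨i, hi, rfl⟩
    have : (i + 1) * r ≤ n * r := Nat.mul_le_mul_right r hi
    refine ⟨⟨by omega, by rw [add_mul] at this; omega⟩, ?_⟩
    simp [Nat.ModEq, Nat.add_mul_mod_self_right]
  · rintro ⟨⟨h1, hN⟩, hx⟩
    obtain ⟨i, hi⟩ := (Nat.modEq_iff_dvd' h1).1 hx.symm
    have hx' : x = 1 + i * r := by rw [mul_comm] at hi; omega
    exact ⟨i, Nat.lt_of_mul_lt_mul_right (a := r) (by omega), hx'.symm⟩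

theorem card_Zset (hr : 0 < r) : (Zset n r).card = n := by
  rw [Zset, card_image_of_injective _ fun a b h => Nat.eq_of_mul_eq_mul_right hr (by omega),
    card_range]

theorem cosetOf_subset_Zset (hr : 0 < r) (hq1 : q ≡ 1 [MOD r]) {i : ℕ} (hi : i ∈ Zset n r) :
    cosetOf q (n * r) i ⊆ Zset n r := by
  intro x hx
  obtain ⟨hxN, j, hj⟩ := mem_filter.1 hx
  have hi1 := ((mem_Zset_iff hr).1 hi).2
  refine (mem_Zset_iff hr).2 ⟨hxN, ?_⟩
  simpa using (hj.of_mul_left n).trans (hi1.mul (hq1.pow j))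

end Zset

theorem leader_mem {C : Finset ℕ} (hC : C.Nonempty) : leader C ∈ C :=
  Nat.sInf_mem (coe_nonempty.2 hC)

theorem mul_modEq_self_iff {N a x : ℕ} (hN : 0 < N) (ha : 0 < a) :
    x * a ≡ x [MOD N] ↔ N / N.gcd (a - 1) ∣ x := by
  rw [Nat.div_dvd_iff_dvd_mul (Nat.gcd_dvd_left _ _) (Nat.gcd_pos_of_pos_left _ hN),
    Nat.dvd_gcd_mul_iff_dvd_mul, Nat.ModEq.comm, Nat.modEq_iff_dvd' (Nat.le_mul_of_pos_right x ha),
    Nat.sub_one_mul, mul_comm]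

section Counting

variable {q n r : ℕ}

theorem cosetOf_eq_of_mem_cosetsIn (hq : q.Coprime (n * r)) (hr : 0 < r) {C : Finset ℕ}
    (hC : C ∈ cosetsIn q n r) {x : ℕ} (hx : x ∈ C) : cosetOf q (n * r) x = C := by
  obtain ⟨i, hi, rfl⟩ := mem_image.1 hC
  exact cosetOf_eq_of_mem hq ((mem_Zset_iff hr).1 hi).1 hx

theorem nonempty_of_mem_cosetsIn (hr : 0 < r) {C : Finset ℕ} (hC : C ∈ cosetsIn q n r) :
    C.Nonempty := by
  obtain ⟨i, hi, rfl⟩ := mem_image.1 hC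
  exact ⟨i, self_mem_cosetOf ((mem_Zset_iff hr).1 hi).1⟩

theorem pairwiseDisjoint_cosetsIn (hq : q.Coprime (n * r)) (hr : 0 < r) :
    (cosetsIn q n r : Set (Finset ℕ)).PairwiseDisjoint id := by
  intro C hC D hD hCD
  refine disjoint_left.2 fun x hxC hxD => hCD ?_
  exact (cosetOf_eq_of_mem_cosetsIn hq hr hC hxC).symm.trans
    (cosetOf_eq_of_mem_cosetsIn hq hr hD hxD)

theorem filter_Zset_card_cosetOf_eq_biUnion (hq : q.Coprime (n * r)) (hr : 0 < r)
    (hq1 : q ≡ 1 [MOD r]) (c : ℕ) :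
    (Zset n r).filter (fun x => (cosetOf q (n * r) x).card = c) =
      ((cosetsIn q n r).filter (fun C => C.card = c)).biUnion id := by
  ext x
  simp only [mem_filter, mem_biUnion, id]
  constructor
  · rintro ⟨hx, hc⟩
    exact ⟨_, ⟨mem_image_of_mem _ hx, hc⟩, self_mem_cosetOf ((mem_Zset_iff hr).1 hx).1⟩
  · rintro ⟨C, ⟨hC, hc⟩, hx⟩
    obtain ⟨i, hi, rfl⟩ := mem_image.1 hC
    exact ⟨cosetOf_subset_Zset hr hq1 hi hx, by rwa [cosetOf_eq_of_mem_cosetsIn hq hr hC hx]⟩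

theorem card_filter_Zset_card_cosetOf_eq (hq : q.Coprime (n * r)) (hr : 0 < r)
    (hq1 : q ≡ 1 [MOD r]) (c : ℕ) :
    ((Zset n r).filter (fun x => (cosetOf q (n * r) x).card = c)).card = c * Ncount q n r c := by
  rw [filter_Zset_card_cosetOf_eq_biUnion hq hr hq1,
    card_biUnion ((pairwiseDisjoint_cosetsIn hq hr).subset (filter_subset _ _))]
  exact (sum_const_nat fun C hC => (mem_filter.1 hC).2).trans (mul_comm _ _)

theorem length_leaderList (hq : q.Coprime (n * r)) (hr : 0 < r) (c : ℕ) :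
    (leaderList q n r c).length = Ncount q n r c := by
  rw [leaderList, length_sort, card_image_of_injOn]
  · rfl
  intro C hC D hD h
  have hC' := (mem_filter.1 hC).1
  have hD' := (mem_filter.1 hD).1
  rw [← cosetOf_eq_of_mem_cosetsIn hq hr hC' (leader_mem (nonempty_of_mem_cosetsIn hr hC')),
    ← cosetOf_eq_of_mem_cosetsIn hq hr hD' (leader_mem (nonempty_of_mem_cosetsIn hr hD')), h]

theorem leaderList_subset (hq : q.Coprime (n * r)) (hr : 0 < r) (hq1 : q ≡ 1 [MOD r]) (c : ℕ)
    {x : ℕ} (hx : x ∈ leaderList q n r c) :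
    x ∈ (Zset n r).filter (fun x => (cosetOf q (n * r) x).card = c) := by
  rw [filter_Zset_card_cosetOf_eq_biUnion hq hr hq1]
  obtain ⟨C, hC, rfl⟩ := mem_image.1 ((mem_sort _).1 hx)
  exact mem_biUnion.2 ⟨C, hC, leader_mem (nonempty_of_mem_cosetsIn hr (mem_filter.1 hC).1)⟩

theorem eq_mul_Ncount_add_mul_Ncount (hq : q.Coprime (n * r)) (hr : 0 < r)
    (hq1 : q ≡ 1 [MOD r]) {l m : ℕ}
    (hset : (Zset n r).image (fun i => (cosetOf q (n * r) i).card) = {l, m}) (hlm : l ≠ m) :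
    n = l * Ncount q n r l + m * Ncount q n r m := by
  have hsplit := card_filter_add_card_filter_not (s := Zset n r)
    (fun x => (cosetOf q (n * r) x).card = l)
  have hm : ∀ x ∈ Zset n r, (cosetOf q (n * r) x).card ≠ l ↔ (cosetOf q (n * r) x).card = m := by
    intro x hx
    have hc : (cosetOf q (n * r) x).card ∈ ({l, m} : Finset ℕ) := hset ▸ mem_image_of_mem _ hx
    rw [mem_insert, mem_singleton] at hc
    omega
  rw [filter_congr hm, card_filter_Zset_card_cosetOf_eq hq hr hq1,
    card_filter_Zset_card_cosetOf_eq hq hr hq1, card_Zset hr] at hsplit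
  exact hsplit.symm

theorem card_cosetOf_eq_iff_modEq (hq : q.Coprime (n * r)) (hr : 0 < r) {l m : ℕ}
    (hset : (Zset n r).image (fun i => (cosetOf q (n * r) i).card) = {l, m}) (hl : 0 < l)
    (hlm : l < m) {x : ℕ} (hx : x ∈ Zset n r) :
    (cosetOf q (n * r) x).card = l ↔ x * q ^ l ≡ x [MOD n * r] := by
  rw [← card_cosetOf_dvd_iff hq ((mem_Zset_iff hr).1 hx).1]
  have hc : (cosetOf q (n * r) x).card ∈ ({l, m} : Finset ℕ) := hset ▸ mem_image_of_mem _ hx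
  rw [mem_insert, mem_singleton] at hc
  refine ⟨fun h => h ▸ dvd_rfl, fun h => hc.resolve_right fun hm => ?_⟩
  exact absurd (Nat.le_of_dvd hl (hm ▸ h)) (by omega)

theorem filter_Zset_card_cosetOf_eq_filter_dvd (hq0 : 0 < q) (hn : 0 < n)
    (hq : q.Coprime (n * r)) (hr : 0 < r) {l m : ℕ}
    (hset : (Zset n r).image (fun i => (cosetOf q (n * r) i).card) = {l, m}) (hl : 0 < l)
    (hlm : l < m) :
    (Zset n r).filter (fun x => (cosetOf q (n * r) x).card = l) =
      (Icc 1 (n * r)).filter (fun x => x ≡ 1 [MOD r] ∧ n * r / (n * r).gcd (q ^ l - 1) ∣ x) := by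
  ext x
  simp only [mem_filter, ← and_assoc, ← mem_Zset_iff hr]
  exact and_congr_right fun hx => (card_cosetOf_eq_iff_modEq hq hr hset hl hlm hx).trans
    (mul_modEq_self_iff (by positivity) (pow_pos hq0 l))

end Counting

theorem two_mul_le_of_dvd_of_lt {l m : ℕ} (hl : 0 < l) (hlm : l < m) (hdvd : l ∣ m) :
    2 * l ≤ m := by
  obtain ⟨c, rfl⟩ := hdvd
  nlinarith [(lt_mul_iff_one_lt_right hl).1 hlm]

section ResidueClass

variable {N r d : ℕ}

theorem filter_modEq_one_and_dvd_eq {x₀ : ℕ}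
    (hx₀ : x₀ ∈ (Icc 1 N).filter (fun x => x ≡ 1 [MOD r] ∧ d ∣ x)) :
    (Icc 1 N).filter (fun x => x ≡ 1 [MOD r] ∧ d ∣ x) =
      (Icc 1 N).filter (· ≡ x₀ [MOD d.lcm r]) := by
  obtain ⟨-, hx₀r, hx₀d⟩ := mem_filter.1 hx₀
  rw [← Nat.modEq_zero_iff_dvd] at hx₀d
  refine filter_congr fun x _ => ⟨fun ⟨hxr, hxd⟩ => ?_, fun h => ⟨?_, ?_⟩⟩
  · exact Nat.mod_lcm ((Nat.modEq_zero_iff_dvd.2 hxd).trans hx₀d.symm) (hxr.trans hx₀r.symm)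
  · exact (h.of_dvd (Nat.dvd_lcm_right d r)).trans hx₀r
  · exact Nat.modEq_zero_iff_dvd.1 ((h.of_dvd (Nat.dvd_lcm_left d r)).trans hx₀d)

theorem card_filter_Icc_modEq {L : ℕ} (hL : 0 < L) (c v : ℕ) :
    ((Icc 1 (L * c)).filter (· ≡ v [MOD L])).card = c := by
  have := Nat.Ioc_filter_modEq_card 0 (L * c) hL v
  rw [Nat.cast_mul, sub_div, mul_div_cancel_left₀ _ (by positivity), Nat.cast_zero, zero_sub,
    neg_div, sub_eq_add_neg (c : ℚ), Int.floor_natCast_add, add_sub_cancel_right] at this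
  exact_mod_cast this.trans (max_eq_left (by positivity))

end ResidueClass

theorem List.getElem_zero_add_mul_le_getElem {l : List ℕ} {L v : ℕ} (hl : l.SortedLT)
    (hL : ∀ a ∈ l, a ≡ v [MOD L]) : ∀ {k : ℕ} (hk : k < l.length),
      l[0] + k * L ≤ l[k]
  | 0, _ => by simp
  | k + 1, hk => by
    have ih := getElem_zero_add_mul_le_getElem hl hL (k := k) (by omega)
    have hlt : l[k] < l[k + 1] := (hl.getElem_lt_getElem_iff).2 (by omega)
    calc l[0] + (k + 1) * L = l[0] + k * L + L := by ring
      _ ≤ l[k] + L := by omega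
      _ ≤ l[k + 1] := ((hL _ (getElem_mem _)).trans (hL _ (getElem_mem _)).symm).add_le_of_lt hlt

/-- With `Q = q - 1`: the count bound gives `2 q N_m r < q N_l L`, while `Q x ≥ r x ≥ L` gives
`2 Q δ ≥ 2 L + 2 Q ⌊N_l / 2⌋ L`; and `q N_l ≤ 4 + 4 Q ⌊N_l / 2⌋` as `N_l ≥ 2`. -/
theorem mul_lt_of_count_le {q r l m Nl Nm L x δ : ℕ} (hr : 0 < r) (hrq : r ≤ q - 1) (hl : 0 < l)
    (hm : 2 * l ≤ m) (hNl : 2 ≤ Nl) (hcount : (l * Nl + m * Nm) * r ≤ L * (l * Nl))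
    (hL : L ≤ r * x) (hδ : x + Nl / 2 * L ≤ δ) :
    q * Nm * r < 2 * (q - 1) * δ := by
  have hcount' : l * ((Nl + 2 * Nm) * r) ≤ l * (L * Nl) := by
    refine le_trans ?_ (hcount.trans_eq (by ring))
    nlinarith [Nat.mul_le_mul_right (Nm * r) hm]
  replace hcount := Nat.le_of_mul_le_mul_left hcount' hl
  obtain ⟨p, rfl⟩ : ∃ p, q = p + 2 := ⟨q - 2, by omega⟩
  rw [show p + 2 - 1 = p + 1 by omega]
  have hpx : L ≤ (p + 1) * x := hL.trans (Nat.mul_le_mul_right x (by omega))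
  have hδ' := Nat.mul_le_mul_left (p + 1) hδ
  have hc' := Nat.mul_le_mul_left (p + 2) hcount
  have : 0 < (p + 2) * r := by positivity
  obtain ⟨k, hk | hk⟩ := Nat.even_or_odd' Nl
  all_goals
    obtain ⟨k, rfl⟩ : ∃ k', k = k' + 1 := ⟨k - 1, by omega⟩
    rw [show Nl / 2 = k + 1 by omega] at hδ'
    subst hk
    have := Nat.zero_le (p * k * L)
    nlinarith

theorem stmt5_general (q n r m l : ℕ) (hq : IsPrimePow q) (hn : 0 < n) (hco : Nat.Coprime n q)
    (hr : 0 < r) (hrdvd : r ∣ q - 1)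
    (hl : 0 < l) (hlm : l < m) (hldvd : l ∣ m)
    (hset : (Zset n r).image (fun i => (cosetOf q (n * r) i).card) = {l, m})
    (hNl : 1 < Ncount q n r l) :
    q * Ncount q n r m * r < 2 * (q - 1) * delta q n r l (Ncount q n r l / 2 + 1) := by
  have hq1 : q ≡ 1 [MOD r] := ((Nat.modEq_iff_dvd' hq.one_lt.le).2 hrdvd).symm
  have hcop : q.Coprime (n * r) := hco.symm.mul_right <| Nat.Coprime.coprime_dvd_right hrdvd <|
    (Nat.coprime_self_sub_right hq.one_lt.le).2 (Nat.coprime_one_right q)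
  set d := n * r / (n * r).gcd (q ^ l - 1)
  set leaders := leaderList q n r l
  have hlen : Ncount q n r l / 2 < leaders.length := by rw [length_leaderList hcop hr]; omega
  have hS := filter_Zset_card_cosetOf_eq_filter_dvd hq.pos hn hcop hr hset hl hlm
  have hx₀ : leaders[0] ∈ (Icc 1 (n * r)).filter (fun x => x ≡ 1 [MOD r] ∧ d ∣ x) :=
    hS ▸ leaderList_subset hcop hr hq1 l (List.getElem_mem _)
  rw [filter_modEq_one_and_dvd_eq hx₀] at hS
  have hcount : n * r = d.lcm r * (l * Ncount q n r l) := by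
    obtain ⟨c, hc⟩ : d.lcm r ∣ n * r :=
      Nat.lcm_dvd (Nat.div_dvd_of_dvd (Nat.gcd_dvd_left _ _)) (dvd_mul_left r n)
    rw [← card_filter_Zset_card_cosetOf_eq hcop hr hq1, hS, hc,
      card_filter_Icc_modEq (Nat.pos_of_dvd_of_pos ⟨c, hc⟩ (by positivity))]
  have hδ : leaders[0] + Ncount q n r l / 2 * d.lcm r ≤
      delta q n r l (Ncount q n r l / 2 + 1) := by
    rw [delta, Nat.add_sub_cancel, List.getD_eq_getElem _ _ hlen]
    refine List.getElem_zero_add_mul_le_getElem (v := leaders[0]) (sortedLT_sort _)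
      (fun a ha => ?_) hlen
    exact (mem_filter.1 (hS ▸ leaderList_subset hcop hr hq1 l ha :)).2
  obtain ⟨hx₀N, -, hx₀d⟩ := mem_filter.1 hx₀
  refine mul_lt_of_count_le (m := m) hr (Nat.le_of_dvd (Nat.sub_pos_of_lt hq.one_lt) hrdvd) hl
    (two_mul_le_of_dvd_of_lt hl hlm hldvd) hNl ?_ ?_ hδ
  · rw [← eq_mul_Ncount_add_mul_Ncount hcop hr hq1 hset hlm.ne, hcount]
  · exact Nat.le_of_dvd (Nat.mul_pos hr (mem_Icc.1 hx₀N).1)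
      (Nat.lcm_dvd (hx₀d.mul_left r) (dvd_mul_right r _))

theorem stmt5 (q n r m s l : ℕ) (hq : IsPrimePow q) (hn : 0 < n) (hco : Nat.Coprime n q)
    (hr : 0 < r) (hrdvd : r ∣ q - 1) (hm : 0 < m) (hs : 0 < s)
    (hnrs : n * r * s = q ^ m - 1)
    (hl : 0 < l) (hlm : l < m) (hldvd : l ∣ m)
    (hset : (Zset n r).image (fun i => (cosetOf q (n * r) i).card) = {l, m})
    (hNl : 1 < Ncount q n r l) :
    q * Ncount q n r m * r < 2 * (q - 1) * delta q n r l (Ncount q n r l / 2 + 1) :=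
  stmt5_general q n r m l hq hn hco hr hrdvd hl hlm hldvd hset hNl
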